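/- arXiv:1901.05161 — 5 statements merged into one kernel-verified Lean document; each statement's English description precedes it below -/
import Mathlib

section
/- For every real number x with |x| ≥ 1 and every t ∈ [0,1] and r ∈ (0,1/2), the bound |(i ± x(1+x²)^{-tr})^{-1}| ≤ 2^r |x|^{2r-1} holds (where i is the imaginary unit and the inverse is taken in ℂ). -/
open scoped ZeroAtInfty
open Set MeasureTheory

variable {H : Type*} [NormedAddCommGroup H] [InnerProductSpace ℂ H] [CompleteSpace H]

theorem Complex.abs_le_norm_I_add_ofReal (a : ℝ) : |a| ≤ ‖Complex.I + a‖ := by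
  simpa using Complex.abs_re_le_norm (Complex.I + a)

theorem Real.one_add_sq_rpow_le {x s r : ℝ} (hx : 1 ≤ |x|) (hs : 0 ≤ s) (hsr : s ≤ r) :
    (1 + x ^ 2) ^ s ≤ 2 ^ r * |x| ^ (2 * r) := by
  have hx2 : 1 ≤ x ^ 2 := by nlinarith [sq_abs x]
  calc (1 + x ^ 2) ^ s ≤ (2 * x ^ 2) ^ s := by gcongr; linarith
    _ ≤ (2 * x ^ 2) ^ r := Real.rpow_le_rpow_of_exponent_le (by linarith) hsr
    _ = 2 ^ r * |x| ^ (2 * r) := by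
      rw [Real.mul_rpow zero_le_two (sq_nonneg x), ← sq_abs, Real.rpow_mul (abs_nonneg x)]
      norm_cast

theorem stmt0 (r t x ε : ℝ) (hr : r ∈ Ioo (0:ℝ) (1/2)) (ht : t ∈ Icc (0:ℝ) 1)
    (hε : ε = 1 ∨ ε = -1) (hx : 1 ≤ |x|) :
    ‖(Complex.I + ((ε * (x * (1 + x ^ 2) ^ (-(t * r))) : ℝ) : ℂ))⁻¹‖ ≤
      (2:ℝ) ^ r * |x| ^ (2 * r - 1) := by
  set a := ε * (x * (1 + x ^ 2) ^ (-(t * r)))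
  have hx0 : 0 < |x| := one_pos.trans_le hx
  have hε1 : |ε| = 1 := by rcases hε with rfl | rfl <;> simp
  have h1x2 : 0 < 1 + x ^ 2 := by positivity
  have habs : |a| = |x| * ((1 + x ^ 2) ^ (t * r))⁻¹ := by
    rw [abs_mul, hε1, one_mul, abs_mul, Real.rpow_neg h1x2.le, abs_inv,
      abs_of_pos (Real.rpow_pos_of_pos h1x2 _)]
  have ha0 : 0 < |a| := by rw [habs]; positivity
  calc ‖(Complex.I + a)⁻¹‖ = ‖Complex.I + a‖⁻¹ := norm_inv _
    _ ≤ |a|⁻¹ := inv_anti₀ ha0 (Complex.abs_le_norm_I_add_ofReal a)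
    _ = |x|⁻¹ * (1 + x ^ 2) ^ (t * r) := by rw [habs, mul_inv, inv_inv]
    _ ≤ |x|⁻¹ * (2 ^ r * |x| ^ (2 * r)) := by
      gcongr
      exact Real.one_add_sq_rpow_le hx (mul_nonneg ht.1 hr.1.le)
        (mul_le_of_le_one_left hr.1.le ht.2)
    _ = 2 ^ r * |x| ^ (2 * r - 1) := by
      rw [Real.rpow_sub hx0, Real.rpow_one]
      ring
end

section
/- Let D be a self-adjoint operator on a Hilbert space H, let a be a bounded operator on H mapping Dom(D) into Dom(D) such that [D,a] extends to a bounded operator d(a). Then for t ∈ (0,1] and r ∈ (0,1/2), the operator norm of the bounded extension of the commutator [(1+D²)^{-tr}, a]D : Dom(D) → H is at most 2‖d(a)‖. -/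
/-! For `0 < θ < 1` and `u > 0` the substitution `t ↦ u t` gives
`∫₀^∞ t^(-θ) (t + u)⁻¹ dt = c u^(-θ)` with `c = ∫₀^∞ t^(-θ) (t + 1)⁻¹ dt > 0`, so
`(1 + D²)^(-θ) = c⁻¹ ∫₀^∞ t^(-θ) (t + 1 + D²)⁻¹ dt`, and the commutator with `a` followed by
multiplication by `D` passes under the integral.

For the resolvent `R = (μ + D²)⁻¹` one has `[R, a] = R [a, D²] R`, hence
`[R, a] D = R [a, D] (D R D) + (R D) [a, D] (R D)`. Since `‖R‖ ≤ μ⁻¹`, `‖D R D‖ ≤ 1` and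
`‖R D‖² = ‖R (D R D)‖ ≤ μ⁻¹`, this gives `‖[R, a] D‖ ≤ 2 μ⁻¹ ‖[D, a]‖`. Integrating against
`c⁻¹ t^(-θ)` with `μ = t + 1` yields `2 ‖[D, a]‖ · c⁻¹ ∫₀^∞ t^(-θ) (t + 1)⁻¹ dt = 2 ‖[D, a]‖`. -/

open Set MeasureTheory

variable {H : Type*} [NormedAddCommGroup H] [InnerProductSpace ℂ H] [CompleteSpace H]

namespace Real

variable {θ u t : ℝ}

lemma rpow_neg_mul_inv_add_eq (ht : 0 < t) (hu : 0 < u) :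
    t ^ (-θ) * (t + u)⁻¹ = u⁻¹ * rpowIntegrand₀₁ (1 - θ) t u := by
  rw [rpowIntegrand₀₁, sub_eq_add_neg, rpow_add ht, rpow_one]
  field_simp
  ring

lemma integrableOn_rpow_neg_mul_inv_add (hθ : θ ∈ Ioo 0 1) (hu : 0 < u) :
    IntegrableOn (fun t => t ^ (-θ) * (t + u)⁻¹) (Ioi 0) := by
  have hp : 1 - θ ∈ Ioo 0 1 := ⟨by linarith [hθ.2], by linarith [hθ.1]⟩
  exact IntegrableOn.congr_fun ((integrableOn_rpowIntegrand₀₁_Ioi hp hu.le).const_mul u⁻¹)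
    (fun t ht => (rpow_neg_mul_inv_add_eq ht hu).symm) measurableSet_Ioi

lemma integral_rpow_neg_mul_inv_add (hθ : θ ∈ Ioo 0 1) (hu : 0 < u) :
    ∫ t in Ioi 0, t ^ (-θ) * (t + u)⁻¹ = u ^ (-θ) * ∫ t in Ioi 0, t ^ (-θ) * (t + 1)⁻¹ := by
  have hp : 1 - θ ∈ Ioo 0 1 := ⟨by linarith [hθ.2], by linarith [hθ.1]⟩
  have hEq (v : ℝ) (hv : 0 < v) : ∫ t in Ioi 0, t ^ (-θ) * (t + v)⁻¹
      = v⁻¹ * ∫ t in Ioi 0, rpowIntegrand₀₁ (1 - θ) t v := by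
    rw [← integral_const_mul]
    exact setIntegral_congr_fun measurableSet_Ioi fun t ht => rpow_neg_mul_inv_add_eq ht hv
  rw [hEq u hu, hEq 1 one_pos, integral_rpowIntegrand₀₁_eq_rpow_mul_const hp hu.le, inv_one,
    one_mul, ← mul_assoc, ← rpow_neg_one, ← rpow_add hu]
  ring_nf

lemma integral_rpow_neg_mul_inv_add_one_pos (hθ : θ ∈ Ioo 0 1) :
    0 < ∫ t in Ioi (0 : ℝ), t ^ (-θ) * (t + 1)⁻¹ := by
  have hp : 1 - θ ∈ Ioo 0 1 := ⟨by linarith [hθ.2], by linarith [hθ.1]⟩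
  rw [setIntegral_congr_fun measurableSet_Ioi fun t ht => rpow_neg_mul_inv_add_eq ht one_pos,
    inv_one]
  simpa using integral_rpowIntegrand₀₁_one_pos hp

lemma continuous_inv_add_sq {μ : ℝ} (hμ : 0 < μ) : Continuous fun x : ℝ => (μ + x ^ 2)⁻¹ :=
  (continuous_const.add (continuous_pow 2)).inv₀
    fun x => (add_pos_of_pos_of_nonneg hμ (sq_nonneg x)).ne'

end Real

lemma norm_map_cfc_setIntegral_le {X A E : Type*} {p : A → Prop} [MeasurableSpace X]
    [TopologicalSpace X] [OpensMeasurableSpace X] {μ : Measure X} [NormedRing A] [StarRing A]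
    [NormedAlgebra ℝ A] [ContinuousFunctionalCalculus ℝ A p] [CompleteSpace A]
    [NormedAddCommGroup E] [NormedSpace ℝ E] [CompleteSpace E]
    (L : A →L[ℝ] E) {s : Set X} (hs : MeasurableSet s) (k : X → ℝ → ℝ) (bound g : X → ℝ)
    (a : A) [SecondCountableTopologyEither X C(spectrum ℝ a, ℝ)]
    (hk : ContinuousOn (Function.uncurry k) (s ×ˢ spectrum ℝ a))
    (hk_le : ∀ᵐ t ∂(μ.restrict s), ∀ z ∈ spectrum ℝ a, ‖k t z‖ ≤ bound t)
    (hbound : HasFiniteIntegral bound (μ.restrict s)) (hg : IntegrableOn g s μ)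
    (hL : ∀ t ∈ s, ‖L (cfc (k t) a)‖ ≤ g t) (ha : p a := by cfc_tac) :
    ‖L (cfc (fun z => ∫ t in s, k t z ∂μ) a)‖ ≤ ∫ t in s, g t ∂μ := by
  rw [cfc_setIntegral hs k bound a hk hk_le hbound ha,
    ← L.integral_comp_comm (integrableOn_cfc hs k bound a hk hk_le hbound ha)]
  exact norm_integral_le_of_norm_le hg (ae_restrict_of_forall_mem hs hL)

lemma resolvent_commutator_mul_eq {𝕜 B : Type*} [CommRing 𝕜] [Ring B] [Algebra 𝕜 B]
    {R P a D : B} (hRP : R * P = 1) (hPR : P * R = 1) (μ : 𝕜)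
    (hP : P = algebraMap 𝕜 B μ + D ^ 2) :
    (R * a - a * R) * D
      = R * (a * D - D * a) * (D * R * D) + R * D * (a * D - D * a) * (R * D) := by
  have hcomm : a * P - P * a = (a * D - D * a) * D + D * (a * D - D * a) := by
    rw [hP]
    simp only [mul_add, add_mul, Algebra.commutes]
    noncomm_ring
  calc (R * a - a * R) * D = (R * a * (P * R) - R * P * (a * R)) * D := by
        rw [hPR, hRP, mul_one, one_mul]
    _ = R * (a * P - P * a) * R * D := by noncomm_ring
    _ = _ := by rw [hcomm]; noncomm_ring

variable {A : Type*} [CStarAlgebra A] {D : A}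

lemma norm_commutator_cfc_inv_add_sq_mul_le (hD : IsSelfAdjoint D) (a : A) {μ : ℝ}
    (hμ : 0 < μ) :
    ‖(cfc (fun x : ℝ => (μ + x ^ 2)⁻¹) D * a - a * cfc (fun x : ℝ => (μ + x ^ 2)⁻¹) D) * D‖
      ≤ 2 * μ⁻¹ * ‖D * a - a * D‖ := by
  have hne : ∀ x ∈ spectrum ℝ D, μ + x ^ 2 ≠ 0 := fun x _ => by positivity
  set R := cfc (fun x : ℝ => (μ + x ^ 2)⁻¹) D
  have hP : cfc (fun x : ℝ => μ + x ^ 2) D = algebraMap ℝ A μ + D ^ 2 := by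
    rw [cfc_const_add μ _ D, cfc_pow_id D 2]
  have hRP : R * cfc (fun x : ℝ => μ + x ^ 2) D = 1 := (cfcUnits _ D hne).inv_val
  have hPR : cfc (fun x : ℝ => μ + x ^ 2) D * R = 1 := (cfcUnits _ D hne).val_inv
  have hRD : Commute R D := (Commute.refl D).cfc_real _
  have hDRD : D * R * D = cfc (fun x : ℝ => (μ + x ^ 2)⁻¹ * x ^ 2) D := by
    rw [cfc_mul _ _ D (Real.continuous_inv_add_sq hμ).continuousOn, cfc_pow_id D 2, sq,
      ← mul_assoc, hRD.eq]
  have hnR : ‖R‖ ≤ μ⁻¹ := by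
    refine norm_cfc_le (by positivity) fun x _ => ?_
    rw [norm_inv, Real.norm_of_nonneg (by positivity)]
    exact inv_anti₀ hμ (by nlinarith [sq_nonneg x])
  have hnDRD : ‖D * R * D‖ ≤ 1 := by
    rw [hDRD]
    refine norm_cfc_le zero_le_one fun x _ => ?_
    rw [Real.norm_of_nonneg (by positivity), inv_mul_le_iff₀ (by positivity)]
    linarith
  have hnRD : ‖R * D‖ ^ 2 ≤ μ⁻¹ := by
    have hsa : IsSelfAdjoint (R * D) := by
      rw [IsSelfAdjoint, star_mul, hD.star_eq, (cfc_predicate _ D : IsSelfAdjoint R).star_eq,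
        hRD.eq]
    calc ‖R * D‖ ^ 2 = ‖R * (D * R * D)‖ := by rw [← hsa.norm_mul_self]; noncomm_ring
      _ ≤ μ⁻¹ * 1 := (norm_mul_le _ _).trans (mul_le_mul hnR hnDRD (norm_nonneg _) (by positivity))
      _ = μ⁻¹ := mul_one _
  rw [resolvent_commutator_mul_eq hRP hPR μ hP, ← norm_neg (D * a - a * D), neg_sub]
  set d := a * D - D * a
  calc ‖R * d * (D * R * D) + R * D * d * (R * D)‖
      ≤ ‖R‖ * ‖d‖ * ‖D * R * D‖ + ‖R * D‖ * ‖d‖ * ‖R * D‖ :=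
        (norm_add_le _ _).trans (add_le_add (norm_mul₃_le ..) (norm_mul₃_le ..))
    _ = ‖R‖ * ‖d‖ * ‖D * R * D‖ + ‖R * D‖ ^ 2 * ‖d‖ := by ring
    _ ≤ μ⁻¹ * ‖d‖ * 1 + μ⁻¹ * ‖d‖ := by gcongr
    _ = 2 * μ⁻¹ * ‖d‖ := by ring

open Real in
lemma norm_map_cfc_one_add_sq_rpow_neg_le {E : Type*} [NormedAddCommGroup E] [NormedSpace ℝ E]
    [CompleteSpace E] {θ : ℝ} (hθ : θ ∈ Ioo 0 1) (hD : IsSelfAdjoint D) (L : A →L[ℝ] E) {C : ℝ}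
    (hL : ∀ μ, 1 < μ → ‖L (cfc (fun x : ℝ => (μ + x ^ 2)⁻¹) D)‖ ≤ C * μ⁻¹) :
    ‖L (cfc (fun x : ℝ => (1 + x ^ 2) ^ (-θ)) D)‖ ≤ C := by
  set c := ∫ t in Ioi (0 : ℝ), t ^ (-θ) * (t + 1)⁻¹
  have hc : 0 < c := integral_rpow_neg_mul_inv_add_one_pos hθ
  let k (t x : ℝ) : ℝ := c⁻¹ * (t ^ (-θ) * (t + (1 + x ^ 2))⁻¹)
  let bound (t : ℝ) : ℝ := c⁻¹ * (t ^ (-θ) * (t + 1)⁻¹)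
  have hk_cont : ContinuousOn (Function.uncurry k) (Ioi 0 ×ˢ spectrum ℝ D) := by
    refine continuousOn_const.mul (ContinuousOn.mul ?_ ?_)
    · exact continuous_fst.continuousOn.rpow_const fun p hp => Or.inl (ne_of_gt hp.1)
    · exact (Continuous.continuousOn (by fun_prop)).inv₀ fun p hp => by
        have : (0 : ℝ) < p.1 := hp.1
        positivity
  have hk_le : ∀ᵐ t ∂(volume.restrict (Ioi 0)), ∀ x ∈ spectrum ℝ D, ‖k t x‖ ≤ bound t := by
    refine ae_restrict_of_forall_mem measurableSet_Ioi fun t (ht : 0 < t) x _ => ?_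
    dsimp only [k, bound]
    rw [Real.norm_of_nonneg (by positivity)]
    gcongr
    nlinarith [sq_nonneg x]
  have hbound_int : IntegrableOn bound (Ioi 0) :=
    (integrableOn_rpow_neg_mul_inv_add hθ one_pos).const_mul c⁻¹
  have hL_le : ∀ t ∈ Ioi (0 : ℝ), ‖L (cfc (k t) D)‖ ≤ C * bound t := by
    intro t (ht : 0 < t)
    have hk : cfc (k t) D = (c⁻¹ * t ^ (-θ)) • cfc (fun x : ℝ => ((t + 1) + x ^ 2)⁻¹) D := by
      rw [← cfc_const_mul _ _ D (continuous_inv_add_sq (by positivity)).continuousOn]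
      exact cfc_congr fun x _ => by simp only [k, add_assoc, mul_assoc]
    rw [hk, map_smul, norm_smul, Real.norm_of_nonneg (by positivity)]
    calc c⁻¹ * t ^ (-θ) * ‖L (cfc (fun x : ℝ => ((t + 1) + x ^ 2)⁻¹) D)‖
        ≤ c⁻¹ * t ^ (-θ) * (C * (t + 1)⁻¹) := by gcongr; exact hL _ (by linarith)
      _ = C * bound t := by ring
  have hrepr : cfc (fun x : ℝ => (1 + x ^ 2) ^ (-θ)) D
      = cfc (fun x => ∫ t in Ioi 0, k t x) D := by
    refine cfc_congr fun x _ => ?_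
    rw [integral_const_mul, integral_rpow_neg_mul_inv_add hθ (by positivity), mul_comm,
      mul_assoc, mul_inv_cancel₀ hc.ne', mul_one]
  calc _ ≤ ∫ t in Ioi 0, C * bound t := hrepr ▸
        norm_map_cfc_setIntegral_le L measurableSet_Ioi k bound _ D hk_cont hk_le hbound_int.2
          (hbound_int.const_mul _) hL_le
    _ = C := by rw [integral_const_mul, integral_const_mul, inv_mul_cancel₀ hc.ne', mul_one]

lemma norm_commutator_cfc_one_add_sq_rpow_neg_mul_le {θ : ℝ} (hθ : θ ∈ Ioo 0 1)
    (hD : IsSelfAdjoint D) (a : A) :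
    ‖(cfc (fun x : ℝ => (1 + x ^ 2) ^ (-θ)) D * a
        - a * cfc (fun x : ℝ => (1 + x ^ 2) ^ (-θ)) D) * D‖ ≤ 2 * ‖D * a - a * D‖ :=
  norm_map_cfc_one_add_sq_rpow_neg_le hθ hD
    ((ContinuousLinearMap.mul ℝ A).flip D ∘L
      ((ContinuousLinearMap.mul ℝ A).flip a - ContinuousLinearMap.mul ℝ A a))
    fun μ hμ => (norm_commutator_cfc_inv_add_sq_mul_le hD a (by linarith)).trans_eq (by ring)

theorem stmt4 (D a : H →L[ℂ] H) (hD : IsSelfAdjoint D) (t r : ℝ)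
    (ht : t ∈ Ioc (0:ℝ) 1) (hr : r ∈ Ioo (0:ℝ) (1/2)) :
    ‖(cfc (fun x : ℝ => (1 + x ^ 2) ^ (-(t * r))) D * a -
        a * cfc (fun x : ℝ => (1 + x ^ 2) ^ (-(t * r))) D) * D‖ ≤ 2 * ‖D * a - a * D‖ := by
  have htr : t * r ∈ Ioo (0 : ℝ) 1 :=
    ⟨mul_pos ht.1 hr.1, by nlinarith [ht.1, ht.2, hr.1, hr.2]⟩
  exact norm_commutator_cfc_one_add_sq_rpow_neg_mul_le htr hD a
end

section
/- Let D be a self-adjoint operator on a Hilbert space H. Define E = [[D, 1],[1, -D]] on Dom(D) ⊕ Dom(D) ⊆ H ⊕ H. Then E is self-adjoint and E² = (1+D²) ⊕ (1+D²) on Dom(D²) ⊕ Dom(D²); in particular E is invertible with bounded inverse. -/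
/-!
For `T = [[D, 1], [1, -D]]` a direct computation gives `T² = (1 + D²) ⊕ (1 + D²)`, so
`⟪(T² - 1) x, x⟫ = ‖D ξ‖² + ‖D η‖² ≥ 0` for `x = (ξ, η)`. Hence `1 ≤ T²` in the
C⋆-algebra of bounded operators, which makes `T²`, and therefore `T`, invertible.
-/

open scoped ZeroAtInfty
open Set MeasureTheory

variable {H : Type*} [NormedAddCommGroup H] [InnerProductSpace ℂ H] [CompleteSpace H]

theorem CStarAlgebra.isUnit_of_one_le_mul_self {A : Type*} [CStarAlgebra A] [PartialOrder A]
    [StarOrderedRing A] {a : A} (h : 1 ≤ a * a) : IsUnit a :=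
  isUnit_mul_self_iff.mp (CStarAlgebra.isUnit_of_le 1 h)

def IsBlockOperator {𝕜 E : Type*} [RCLike 𝕜] [NormedAddCommGroup E] [InnerProductSpace 𝕜 E]
    (D : E →L[𝕜] E) (T : WithLp 2 (E × E) →L[𝕜] WithLp 2 (E × E)) : Prop :=
  ∀ ξ η : E, T (WithLp.toLp 2 (ξ, η)) = WithLp.toLp 2 (D ξ + η, ξ - D η)

namespace IsBlockOperator

variable {𝕜 E : Type*} [RCLike 𝕜] [NormedAddCommGroup E] [InnerProductSpace 𝕜 E]
  {D : E →L[𝕜] E} {T : WithLp 2 (E × E) →L[𝕜] WithLp 2 (E × E)}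

local notation "⟪" x ", " y "⟫" => inner 𝕜 x y

theorem apply_apply (hT : IsBlockOperator D T) (ξ η : E) :
    T (T (WithLp.toLp 2 (ξ, η))) = WithLp.toLp 2 (ξ + D (D ξ), η + D (D η)) := by
  rw [hT, hT]
  congr 2 <;> simp only [map_add, map_sub] <;> abel

theorem mul_self_sub_one_apply (hT : IsBlockOperator D T) (ξ η : E) :
    (T * T - 1) (WithLp.toLp 2 (ξ, η)) = WithLp.toLp 2 (D (D ξ), D (D η)) := by
  simp only [sub_apply, mul_apply_eq_comp, hT.apply_apply, one_apply_eq_self,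
    ← WithLp.toLp_sub, Prod.mk_sub_mk, add_sub_cancel_left]

variable [CompleteSpace E]

theorem isSelfAdjoint (hT : IsBlockOperator D T) (hD : IsSelfAdjoint D) : IsSelfAdjoint T := by
  have hDsymm : ∀ a b, ⟪D a, b⟫ = ⟪a, D b⟫ := hD.isSymmetric
  rw [ContinuousLinearMap.isSelfAdjoint_iff_isSymmetric]
  rintro ⟨ξ, η⟩ ⟨ξ', η'⟩
  simp only [ContinuousLinearMap.coe_coe, hT ξ η, hT ξ' η', WithLp.prod_inner_apply,
    inner_add_left, inner_add_right, inner_sub_left, inner_sub_right, hDsymm]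
  ring

theorem one_le_mul_self (hT : IsBlockOperator D T) (hD : IsSelfAdjoint D) : 1 ≤ T * T := by
  have hDsymm : ∀ a b, ⟪D a, b⟫ = ⟪a, D b⟫ := hD.isSymmetric
  rw [ContinuousLinearMap.le_def, ContinuousLinearMap.isPositive_def']
  refine ⟨((hT.isSelfAdjoint hD).star_eq ▸ IsSelfAdjoint.star_mul_self T).sub (.one _),
    fun x => ?_⟩
  obtain ⟨ξ, η⟩ := x
  rw [ContinuousLinearMap.reApplyInnerSelf_apply, hT.mul_self_sub_one_apply, WithLp.prod_inner_apply,
    hDsymm (D ξ), hDsymm (D η), map_add]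
  exact add_nonneg inner_self_nonneg inner_self_nonneg

end IsBlockOperator

theorem IsBlockOperator.isUnit {E : Type*} [NormedAddCommGroup E] [InnerProductSpace ℂ E]
    [CompleteSpace E] {D : E →L[ℂ] E} {T : WithLp 2 (E × E) →L[ℂ] WithLp 2 (E × E)}
    (hT : IsBlockOperator D T) (hD : IsSelfAdjoint D) : IsUnit T :=
  CStarAlgebra.isUnit_of_one_le_mul_self (hT.one_le_mul_self hD)

theorem stmt10 (D : H →L[ℂ] H) (hD : IsSelfAdjoint D)
    (E : WithLp 2 (H × H) →L[ℂ] WithLp 2 (H × H))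
    (hE : ∀ ξ η : H, E ((WithLp.equiv 2 (H × H)).symm (ξ, η)) =
      (WithLp.equiv 2 (H × H)).symm (D ξ + η, ξ - D η)) :
    IsSelfAdjoint E ∧
    (∀ ξ η : H, E (E ((WithLp.equiv 2 (H × H)).symm (ξ, η))) =
      (WithLp.equiv 2 (H × H)).symm (ξ + D (D ξ), η + D (D η))) ∧
    IsUnit E :=
  have hBlock : IsBlockOperator D E := hE
  ⟨hBlock.isSelfAdjoint hD, hBlock.apply_apply, hBlock.isUnit hD⟩
end

section
/- Let D be a self-adjoint operator on a Hilbert space H and P an orthogonal projection commuting with D (P preserves Dom D and DP = PD on Dom D) such that D₊ := DP and D₋ := D(P-1) are both positive. Then the difference D(1+D²)^{-1/2} - (2P-1) extends to a bounded operator on H. More precisely, D(1+D²)^{-1/2}P - P = (D₊ - (1+D₊²)^{1/2})(1+D²)^{-1/2}P and D(1+D²)^{-1/2}(1-P) + (1-P) = -(D₋ - (1+D₋²)^{1/2})(1+D²)^{-1/2}(1-P), with both factors in parentheses extending to bounded operators of norm at most 1. -/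
set_option synthInstance.maxHeartbeats 1000000
set_option maxHeartbeats 1000000


open scoped ZeroAtInfty
open Set MeasureTheory

variable {H : Type*} [NormedAddCommGroup H] [InnerProductSpace ℂ H] [CompleteSpace H]

/-- continuity of the scalar function `x ↦ (1+x²)^(-1/2)` -/
private lemma gcont : Continuous (fun x : ℝ => (1 + x ^ 2) ^ (-(1/2 : ℝ))) := by
  rw [continuous_iff_continuousAt]
  intro x
  have h1 : (0:ℝ) < 1 + x ^ 2 := by positivity
  exact ContinuousAt.rpow_const (by fun_prop) (Or.inl h1.ne')

/-- an operator commuting with `a` commutes with any `cfc` of `a`. -/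
private lemma commute_cfc (a b : H →L[ℂ] H) (ha : IsSelfAdjoint a) (hab : Commute a b)
    (f : ℝ → ℝ) : Commute (cfc f a) b := by
  by_cases hf : ContinuousOn f (spectrum ℝ a)
  · rw [cfc_apply f a ha hf]
    have key : ∀ g : C(spectrum ℝ a, ℝ), Commute (cfcHom ha g) b := by
      intro g
      induction g using ContinuousMap.induction_on_of_compact with
      | const r =>
        have : (ContinuousMap.const (spectrum ℝ a) r) = algebraMap ℝ C(spectrum ℝ a, ℝ) r := rfl
        rw [this, AlgHomClass.commutes]
        exact (Algebra.commutes r b)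
      | id => rw [cfcHom_id ha]; exact hab
      | star_id =>
        have : star ((ContinuousMap.id ℝ).restrict (spectrum ℝ a)) =
            (ContinuousMap.id ℝ).restrict (spectrum ℝ a) := by
          ext x; simp
        rw [this, cfcHom_id ha]; exact hab
      | add f g hfc hgc => rw [map_add]; exact hfc.add_left hgc
      | mul f g hfc hgc => rw [map_mul]; exact hfc.mul_left hgc
      | frequently f hf =>
        have hc : Continuous (cfcHom ha (R := ℝ)) := (cfcHom_isClosedEmbedding ha).continuous
        have hcl : IsClosed {g : C(spectrum ℝ a, ℝ) | Commute (cfcHom ha g) b} :=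
          isClosed_eq (hc.mul continuous_const) (continuous_const.mul hc)
        exact hcl.closure_subset (mem_closure_iff_frequently.mpr hf)
    exact key _
  · rw [cfc_apply_of_not_continuousOn a hf]
    exact Commute.zero_left b

/-- The key lemma: `cfc g E * Q = cfc g (E*Q) * Q` for `g x = (1+x²)^(-1/2)`. -/
private lemma key_lemma (E Q : H →L[ℂ] H) (hE : IsSelfAdjoint E) (hQ : IsSelfAdjoint Q)
    (hQ2 : Q * Q = Q) (hcomm : E * Q = Q * E) :
    cfc (fun x : ℝ => (1 + x ^ 2) ^ (-(1/2 : ℝ))) E * Q =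
      cfc (fun x : ℝ => (1 + x ^ 2) ^ (-(1/2 : ℝ))) (E * Q) * Q := by
  set g : ℝ → ℝ := fun x : ℝ => (1 + x ^ 2) ^ (-(1/2 : ℝ)) with hg
  obtain ⟨A, hA⟩ : ∃ A : H →L[ℂ] H, A = E * Q := ⟨_, rfl⟩
  rw [← hA]
  have hAsa : IsSelfAdjoint A := by
    rw [hA, IsSelfAdjoint, star_mul, hE.star_eq, hQ.star_eq, ← hcomm]
  have hAQcomm : Commute A Q := by
    show A * Q = Q * A
    rw [hA, mul_assoc, hQ2, hcomm, ← mul_assoc, hQ2]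
  set X : H →L[ℂ] H := cfc g E with hX
  set Y : H →L[ℂ] H := cfc g A with hY
  have hXQ : Commute X Q := commute_cfc E Q hE hcomm g
  have hYQ : Commute Y Q := commute_cfc A Q hAsa hAQcomm g
  have hgnn : ∀ x : ℝ, 0 ≤ g x := fun x => Real.rpow_nonneg (by positivity) _
  have hXnn : (0:H →L[ℂ] H) ≤ X := cfc_nonneg fun x _ => hgnn x
  have hYnn : (0:H →L[ℂ] H) ≤ Y := cfc_nonneg fun x _ => hgnn x
  have hgg : ∀ x : ℝ, g x * g x = (1 + x ^ 2)⁻¹ := by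
    intro x
    have h1 : (0:ℝ) < 1 + x ^ 2 := by positivity
    rw [hg, ← Real.rpow_add h1, show -(1/2:ℝ) + -(1/2) = -1 by norm_num, Real.rpow_neg_one]
  have hX2 : X * X = cfc (fun x : ℝ => (1 + x ^ 2)⁻¹) E := by
    rw [hX, ← cfc_mul g g E gcont.continuousOn gcont.continuousOn]
    exact cfc_congr fun x _ => hgg x
  have hY2 : Y * Y = cfc (fun x : ℝ => (1 + x ^ 2)⁻¹) A := by
    rw [hY, ← cfc_mul g g A gcont.continuousOn gcont.continuousOn]
    exact cfc_congr fun x _ => hgg x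
  have hone : ∀ (T : H →L[ℂ] H), IsSelfAdjoint T →
      cfc (fun x : ℝ => (1 + x ^ 2)⁻¹) T * (1 + T * T) = 1 ∧
      (1 + T * T) * cfc (fun x : ℝ => (1 + x ^ 2)⁻¹) T = 1 := by
    intro T hT
    have hc1 : ContinuousOn (fun x : ℝ => (1 + x ^ 2)⁻¹) (spectrum ℝ T) := by
      apply ContinuousOn.inv₀ (by fun_prop)
      intro x _; positivity
    have hc2 : ContinuousOn (fun x : ℝ => 1 + x ^ 2) (spectrum ℝ T) := by fun_prop
    have hpoly : cfc (fun x : ℝ => 1 + x ^ 2) T = 1 + T * T := by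
      rw [cfc_add T (fun _ => (1:ℝ)) (fun x => x ^ 2) (by fun_prop) (by fun_prop),
        cfc_const_one ℝ T, cfc_pow_id T 2, pow_two]
    constructor
    · rw [← hpoly, ← cfc_mul _ _ T hc1 hc2]
      calc cfc (fun x : ℝ => (1 + x ^ 2)⁻¹ * (1 + x ^ 2)) T
          = cfc (fun _ : ℝ => (1:ℝ)) T := cfc_congr fun x _ => by
            have : (0:ℝ) < 1 + x ^ 2 := by positivity
            field_simp
        _ = 1 := cfc_const_one ℝ T
    · rw [← hpoly, ← cfc_mul _ _ T hc2 hc1]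
      calc cfc (fun x : ℝ => (1 + x ^ 2) * (1 + x ^ 2)⁻¹) T
          = cfc (fun _ : ℝ => (1:ℝ)) T := cfc_congr fun x _ => by
            have : (0:ℝ) < 1 + x ^ 2 := by positivity
            field_simp
        _ = 1 := cfc_const_one ℝ T
  have hAAQ : (1 + A * A) * Q = (1 + E * E) * Q := by
    have hAA : A * A = E * E * Q := by
      rw [hA, mul_assoc, ← mul_assoc Q E Q, ← hcomm, mul_assoc E Q Q, hQ2, ← mul_assoc]
    rw [add_mul, add_mul, hAA, mul_assoc, hQ2]
  have cXQ : X * X * Q = Q * (X * X) := by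
    rw [mul_assoc, hXQ.eq, ← mul_assoc, hXQ.eq, mul_assoc]
  have hsq : X * X * Q = Y * Y * Q := by
    have e1 : (1 + A * A) * (X * X * Q) = Q := by
      calc (1 + A * A) * (X * X * Q) = ((1 + A * A) * Q) * (X * X) := by
            rw [cXQ, mul_assoc]
        _ = ((1 + E * E) * Q) * (X * X) := by rw [hAAQ]
        _ = (1 + E * E) * (X * X * Q) := by rw [mul_assoc, ← cXQ]
        _ = ((1 + E * E) * cfc (fun x : ℝ => (1 + x ^ 2)⁻¹) E) * Q := by
            rw [hX2, mul_assoc]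
        _ = Q := by rw [(hone E hE).2, one_mul]
    calc X * X * Q
        = (cfc (fun x : ℝ => (1 + x ^ 2)⁻¹) A * (1 + A * A)) * (X * X * Q) := by
          rw [(hone A hAsa).1, one_mul]
      _ = cfc (fun x : ℝ => (1 + x ^ 2)⁻¹) A * ((1 + A * A) * (X * X * Q)) := by
          rw [mul_assoc]
      _ = Y * Y * Q := by rw [e1, ← hY2]
  have hXQsq : (X * Q) * (X * Q) = X * X * Q := by
    rw [mul_assoc X Q (X * Q), ← mul_assoc Q X (Q : H →L[ℂ] H), ← hXQ.eq,
      mul_assoc X Q Q, hQ2, ← mul_assoc]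
  have hYQsq : (Y * Q) * (Y * Q) = Y * Y * Q := by
    rw [mul_assoc Y Q (Y * Q), ← mul_assoc Q Y (Q : H →L[ℂ] H), ← hYQ.eq,
      mul_assoc Y Q Q, hQ2, ← mul_assoc]
  have hXQnn : (0:H →L[ℂ] H) ≤ X * Q := by
    have h : X * Q = star Q * X * Q := by
      rw [hQ.star_eq, ← hXQ.eq, mul_assoc, hQ2]
    rw [h]
    exact star_left_conjugate_nonneg hXnn Q
  have hYQnn : (0:H →L[ℂ] H) ≤ Y * Q := by
    have h : Y * Q = star Q * Y * Q := by
      rw [hQ.star_eq, ← hYQ.eq, mul_assoc, hQ2]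
    rw [h]
    exact star_left_conjugate_nonneg hYnn Q
  have e2 : CFC.sqrt (Y * Y * Q) = X * Q :=
    CFC.sqrt_unique (by rw [hXQsq, hsq]) hXQnn
  have e3 : CFC.sqrt (Y * Y * Q) = Y * Q :=
    CFC.sqrt_unique hYQsq hYQnn
  exact e2.symm.trans e3

/-- cancellation : `cfc √(1+x²) A * (cfc (1+x²)^(-1/2) A) = 1` for selfadjoint `A`. -/
private lemma cancel_lemma (A : H →L[ℂ] H) (hAsa : IsSelfAdjoint A) :
    cfc (fun x : ℝ => Real.sqrt (1 + x ^ 2)) A *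
      cfc (fun x : ℝ => (1 + x ^ 2) ^ (-(1/2 : ℝ))) A = 1 := by
  have hfc : ContinuousOn (fun x : ℝ => Real.sqrt (1 + x ^ 2)) (spectrum ℝ A) := by fun_prop
  rw [← cfc_mul _ _ A hfc gcont.continuousOn]
  calc cfc (fun x : ℝ => Real.sqrt (1 + x ^ 2) * (1 + x ^ 2) ^ (-(1/2 : ℝ))) A
      = cfc (fun _ : ℝ => (1:ℝ)) A := by
        apply cfc_congr
        intro x _
        show Real.sqrt (1 + x ^ 2) * (1 + x ^ 2) ^ (-(1/2 : ℝ)) = 1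
        have h1 : (0:ℝ) < 1 + x ^ 2 := by positivity
        rw [Real.sqrt_eq_rpow, ← Real.rpow_add h1, show (1/2:ℝ) + -(1/2) = 0 by norm_num,
          Real.rpow_zero]
    _ = 1 := cfc_const_one ℝ A

/-- combined identity used for both halves of the theorem. -/
private lemma half_lemma (E Q : H →L[ℂ] H) (hE : IsSelfAdjoint E) (hQ : IsSelfAdjoint Q)
    (hQ2 : Q * Q = Q) (hcomm : E * Q = Q * E) :
    E * cfc (fun x : ℝ => (1 + x ^ 2) ^ (-(1/2 : ℝ))) E * Q - Q =
      (E * Q - cfc (fun x : ℝ => Real.sqrt (1 + x ^ 2)) (E * Q)) *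
        (cfc (fun x : ℝ => (1 + x ^ 2) ^ (-(1/2 : ℝ))) E * Q) := by
  set g : ℝ → ℝ := fun x : ℝ => (1 + x ^ 2) ^ (-(1/2 : ℝ)) with hg
  obtain ⟨A, hA⟩ : ∃ A : H →L[ℂ] H, A = E * Q := ⟨_, rfl⟩
  rw [← hA]
  have hAsa : IsSelfAdjoint A := by
    rw [hA, IsSelfAdjoint, star_mul, hE.star_eq, hQ.star_eq, ← hcomm]
  have hXQ : Commute (cfc g E) Q := commute_cfc E Q hE hcomm g
  have hkey := key_lemma E Q hE hQ hQ2 hcomm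
  rw [← hA] at hkey
  rw [sub_mul]
  have hq : Q * (cfc g E * Q) = cfc g E * Q := by
    rw [← mul_assoc, ← hXQ.eq, mul_assoc, hQ2]
  have h1 : A * (cfc g E * Q) = E * cfc g E * Q := by
    rw [hA, mul_assoc E Q (cfc g E * Q), hq, ← mul_assoc]
  have h2 : cfc (fun x : ℝ => Real.sqrt (1 + x ^ 2)) A * (cfc g E * Q) = Q := by
    rw [hkey, ← mul_assoc, cancel_lemma A hAsa, one_mul]
  rw [h1, h2]

/-- norm bound : for positive `T`, `‖T - cfc √(1+x²) T‖ ≤ 1`. -/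
private lemma norm_lemma (T : H →L[ℂ] H) (hT : T.IsPositive) :
    ‖T - cfc (fun x : ℝ => Real.sqrt (1 + x ^ 2)) T‖ ≤ 1 := by
  have hTnn : (0:H →L[ℂ] H) ≤ T := (ContinuousLinearMap.nonneg_iff_isPositive T).mpr hT
  have hTsa : IsSelfAdjoint T := hT.isSelfAdjoint
  have hfc : ContinuousOn (fun x : ℝ => Real.sqrt (1 + x ^ 2)) (spectrum ℝ T) := by fun_prop
  have key : T - cfc (fun x : ℝ => Real.sqrt (1 + x ^ 2)) T =
      cfc (fun x : ℝ => x - Real.sqrt (1 + x ^ 2)) T := by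
    rw [cfc_sub (fun x : ℝ => x) (fun x : ℝ => Real.sqrt (1 + x ^ 2)) T (by fun_prop) hfc,
      cfc_id' ℝ T]
  rw [key]
  apply norm_cfc_le (by norm_num : (0:ℝ) ≤ 1)
  intro x hx
  have hx0 : 0 ≤ x := spectrum_nonneg_of_nonneg hTnn hx
  have hle : Real.sqrt (1 + x ^ 2) ≤ 1 + x := by
    have h2 : 1 + x ^ 2 ≤ (1 + x) ^ 2 := by nlinarith
    calc Real.sqrt (1 + x ^ 2) ≤ Real.sqrt ((1 + x) ^ 2) := Real.sqrt_le_sqrt h2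
      _ = 1 + x := Real.sqrt_sq (by linarith)
  have hge : x ≤ Real.sqrt (1 + x ^ 2) := by
    have h2 : x ^ 2 ≤ 1 + x ^ 2 := by linarith
    calc x = Real.sqrt (x ^ 2) := (Real.sqrt_sq hx0).symm
      _ ≤ Real.sqrt (1 + x ^ 2) := Real.sqrt_le_sqrt h2
  rw [Real.norm_eq_abs, abs_sub_comm, abs_of_nonneg (by linarith)]
  linarith

theorem stmt15 (D P : H →L[ℂ] H) (hD : IsSelfAdjoint D) (hP : IsSelfAdjoint P)
    (hP2 : P * P = P) (hcomm : D * P = P * D)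
    (hposPlus : (D * P).IsPositive) (hposMinus : (D * (P - 1)).IsPositive) :
    D * cfc (fun x : ℝ => (1 + x ^ 2) ^ (-(1/2 : ℝ))) D * P - P =
      (D * P - cfc (fun x : ℝ => Real.sqrt (1 + x ^ 2)) (D * P)) *
        (cfc (fun x : ℝ => (1 + x ^ 2) ^ (-(1/2 : ℝ))) D * P) ∧
    D * cfc (fun x : ℝ => (1 + x ^ 2) ^ (-(1/2 : ℝ))) D * (1 - P) + (1 - P) =
      -((D * (P - 1) - cfc (fun x : ℝ => Real.sqrt (1 + x ^ 2)) (D * (P - 1))) *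
        (cfc (fun x : ℝ => (1 + x ^ 2) ^ (-(1/2 : ℝ))) D * (1 - P))) ∧
    ‖D * P - cfc (fun x : ℝ => Real.sqrt (1 + x ^ 2)) (D * P)‖ ≤ 1 ∧
    ‖D * (P - 1) - cfc (fun x : ℝ => Real.sqrt (1 + x ^ 2)) (D * (P - 1))‖ ≤ 1 := by
  have hgeven : cfc (fun x : ℝ => (1 + x ^ 2) ^ (-(1/2 : ℝ))) (-D) =
      cfc (fun x : ℝ => (1 + x ^ 2) ^ (-(1/2 : ℝ))) D := by
    have hneg : cfc (fun x : ℝ => -x) D = -D := by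
      have h := cfc_neg (f := fun x : ℝ => x) (a := D)
      rwa [cfc_id' ℝ D] at h
    rw [← hneg, ← cfc_comp' (fun x : ℝ => (1 + x ^ 2) ^ (-(1/2 : ℝ))) (fun x : ℝ => -x) D
      gcont.continuousOn (by fun_prop) hD]
    apply cfc_congr
    intro x _
    show (1 + (-x) ^ 2) ^ (-(1/2 : ℝ)) = (1 + x ^ 2) ^ (-(1/2 : ℝ))
    rw [neg_sq]
  have hQsa : IsSelfAdjoint (1 - P) := by
    rw [IsSelfAdjoint, star_sub, star_one, hP.star_eq]
  have hQ2 : (1 - P) * (1 - P) = 1 - P := by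
    rw [sub_mul, mul_sub, mul_sub, one_mul, mul_one, hP2]
    abel
  have hcomm2 : (-D) * (1 - P) = (1 - P) * (-D) := by
    rw [neg_mul, mul_sub, mul_one, mul_neg, sub_mul, one_mul, hcomm]
  have hB : (-D) * (1 - P) = D * (P - 1) := by
    rw [neg_mul, mul_sub, mul_one, mul_sub, mul_one]
    abel
  refine ⟨half_lemma D P hD hP hP2 hcomm, ?_, norm_lemma _ hposPlus, norm_lemma _ hposMinus⟩
  have h := half_lemma (-D) (1 - P) hD.neg hQsa hQ2 hcomm2
  rw [hgeven, hB] at h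
  rw [neg_mul, neg_mul] at h
  rw [← h]
  abel
end

section
/- Let D be a self-adjoint operator on a Hilbert space H, r ∈ (0,1/2), and a ∈ B(H) preserving Dom(D) with [D,a] extending to a bounded operator d(a). Then the operator D[(1+D²)^{-1/2}, a]D(1+D²)^{-r}, defined on Dom(D), extends to a bounded operator on H, with norm at most (2‖d(a)‖/π)∫₀^∞ λ^{-1/2}(1+λ)^{-1/2-r} dλ. -/
/-!
Since `π (1 + x²)^(-1/2) = ∫ (1 + t² + x²)⁻¹ dt`, the operator `π (1 + D²)^(-1/2)` is the Bochner
integral of the resolvents `R_t = (1 + t² + D²)⁻¹`. With `d = [D, a]` one has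
`[R_t, a] = -R_t (D d + d D) R_t`, so `D [R_t, a] D (1 + D²)^(-r)` is minus the sum of
`(D R_t D) d (R_t D (1 + D²)^(-r))` and `(D R_t) d (D R_t D (1 + D²)^(-r))`. Each outer factor is a
function of `D` of the form `x^k (1 + x²)^(-ρ) (1 + t² + x²)⁻¹`, bounded by
`(1 + t²)^(k/2 - ρ - 1)`, so both terms have norm at most `‖d‖ (1 + t²)^(-1/2 - r)`, which is
integrable as `r > 0`. The substitution `λ = t²` turns `∫ (1 + t²)^(-1/2 - r) dt` into the stated
integral.
-/

open Set MeasureTheory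

open Real in
theorem integral_inv_add_sq {c : ℝ} (hc : 0 < c) :
    ∫ t : ℝ, (c + t ^ 2)⁻¹ = Real.pi * c ^ (-(1 / 2) : ℝ) := by
  have hsc : 0 < √c := sqrt_pos.mpr hc
  have hscale (t : ℝ) : (c + t ^ 2)⁻¹ = c⁻¹ * (1 + ((√c)⁻¹ * t) ^ 2)⁻¹ := by
    rw [mul_pow, inv_pow, sq_sqrt hc.le, ← mul_inv]
    field_simp
  simp_rw [hscale]
  rw [integral_const_mul, Measure.integral_comp_mul_left (fun u => (1 + u ^ 2)⁻¹),
    integral_univ_inv_one_add_sq, smul_eq_mul, abs_of_pos (inv_pos.mpr (inv_pos.mpr hsc)), inv_inv,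
    rpow_neg hc.le, ← sqrt_eq_rpow]
  field_simp
  rw [sq_sqrt hc.le]

theorem integrable_one_add_sq_rpow {β : ℝ} (hβ : β < -(1 / 2)) :
    Integrable fun t : ℝ => (1 + t ^ 2) ^ β := by
  have := integrable_rpow_neg_one_add_norm_sq (E := ℝ) (μ := volume) (r := -(2 * β))
    (by rw [Module.finrank_self]; push_cast; linarith)
  simpa [Real.norm_eq_abs, sq_abs] using this

theorem integral_Ioi_rpow_neg_half_mul_one_add_rpow (β : ℝ) :
    ∫ l in Ioi (0 : ℝ), l ^ (-(1 / 2) : ℝ) * (1 + l) ^ β = ∫ t : ℝ, (1 + t ^ 2) ^ β := by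
  have hsq : ∫ t : ℝ, (1 + t ^ 2) ^ β = ∫ t : ℝ, (1 + |t| ^ 2) ^ β := by simp_rw [sq_abs]
  rw [hsq, integral_comp_abs (f := fun t => (1 + t ^ 2) ^ β),
    ← integral_comp_rpow_Ioi_of_pos (g := fun l => l ^ (-(1 / 2) : ℝ) * (1 + l) ^ β) two_pos,
    ← integral_const_mul]
  refine setIntegral_congr_fun measurableSet_Ioi fun x (hx : 0 < x) => ?_
  have hx2 : (x ^ (2 : ℝ)) ^ (-(1 / 2) : ℝ) = x⁻¹ := by
    rw [← Real.rpow_mul hx.le]; norm_num [Real.rpow_neg_one]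
  rw [smul_eq_mul, hx2, Real.rpow_two]
  norm_num
  field_simp

theorem one_add_rpow_mul_inv_le {l u s : ℝ} (hl : 0 ≤ l) (hu : 0 ≤ u) (hs₀ : 0 ≤ s) (hs₁ : s ≤ 1) :
    (1 + u) ^ s * (1 + l + u)⁻¹ ≤ (1 + l) ^ (s - 1) := by
  rcases le_total u l with h | h
  · calc (1 + u) ^ s * (1 + l + u)⁻¹ ≤ (1 + l) ^ s * (1 + l)⁻¹ := by
          gcongr ?_ * ?_
          · gcongr
          · exact inv_anti₀ (by positivity) (by linarith)
      _ = (1 + l) ^ (s - 1) := by rw [Real.rpow_sub_one (by positivity)]; rfl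
  · calc (1 + u) ^ s * (1 + l + u)⁻¹ ≤ (1 + u) ^ s * (1 + u)⁻¹ := by
          gcongr; linarith
      _ = (1 + u) ^ (s - 1) := by rw [Real.rpow_sub_one (by positivity)]; rfl
      _ ≤ (1 + l) ^ (s - 1) :=
          Real.rpow_le_rpow_of_nonpos (by positivity) (by linarith) (by linarith)

theorem abs_pow_le_one_add_sq_rpow (x : ℝ) (k : ℕ) : |x| ^ k ≤ (1 + x ^ 2) ^ ((k : ℝ) / 2) := by
  rw [div_eq_inv_mul, Real.rpow_mul (by positivity), Real.rpow_natCast, ← one_div,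
    ← Real.sqrt_eq_rpow]
  gcongr
  rw [← Real.sqrt_sq_eq_abs]
  gcongr
  linarith

theorem continuous_inv_one_add_add_sq {l : ℝ} (hl : 0 ≤ l) :
    Continuous fun x : ℝ => (1 + l + x ^ 2)⁻¹ :=
  Continuous.inv₀ (by fun_prop) fun _ => by positivity

theorem continuous_one_add_sq_rpow (s : ℝ) : Continuous fun x : ℝ => (1 + x ^ 2) ^ s :=
  Continuous.rpow_const (by fun_prop) fun _ => .inl (by positivity)

theorem norm_inv_one_add_sq_add_sq_le (t x : ℝ) : ‖(1 + t ^ 2 + x ^ 2)⁻¹‖ ≤ (1 + t ^ 2)⁻¹ := by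
  rw [Real.norm_of_nonneg (by positivity)]
  exact inv_anti₀ (by positivity) (by nlinarith)

theorem continuous_inv_one_add_fst_sq_add_snd_sq :
    Continuous fun p : ℝ × ℝ => (1 + p.1 ^ 2 + p.2 ^ 2)⁻¹ :=
  Continuous.inv₀ (by fun_prop) fun _ => by positivity

theorem Units.inv_mul_sub_mul_inv {R : Type*} [Ring R] (u : Rˣ) (a : R) :
    ↑u⁻¹ * a - a * ↑u⁻¹ = ↑u⁻¹ * (a * u - u * a) * ↑u⁻¹ := by
  simp only [mul_sub, sub_mul, mul_assoc, Units.mul_inv, mul_one]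
  simp only [← mul_assoc, Units.inv_mul, one_mul]

theorem norm_mul_commutator_units_inv_mul_le {𝕜 A : Type*} [CommSemiring 𝕜] [NormedRing A]
    [Algebra 𝕜 A] (u : Aˣ) (c : 𝕜) (D a E : A) (hu : (u : A) = algebraMap 𝕜 A c + D ^ 2) :
    ‖D * (↑u⁻¹ * a - a * ↑u⁻¹) * E‖ ≤
      ‖D * ↑u⁻¹ * D‖ * ‖D * a - a * D‖ * ‖↑u⁻¹ * E‖ +
        ‖D * ↑u⁻¹‖ * ‖D * a - a * D‖ * ‖D * (↑u⁻¹ * E)‖ := by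
  have expand : D * (↑u⁻¹ * a - a * ↑u⁻¹) * E =
      -((D * ↑u⁻¹ * D) * (D * a - a * D) * (↑u⁻¹ * E) +
        (D * ↑u⁻¹) * (D * a - a * D) * (D * (↑u⁻¹ * E))) := by
    rw [Units.inv_mul_sub_mul_inv, hu, add_mul, mul_add, Algebra.commutes]
    noncomm_ring
  rw [expand, norm_neg]
  exact norm_add_le_of_le (norm_mul₃_le ..) (norm_mul₃_le ..)

section

variable {A : Type*} [CStarAlgebra A]

theorem norm_cfc_pow_mul_rpow_mul_inv_le (D : A) (k : ℕ) {ρ l : ℝ} (hl : 0 ≤ l)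
    (h₀ : 0 ≤ k / 2 - ρ) (h₁ : k / 2 - ρ ≤ 1) :
    ‖cfc (fun x : ℝ => x ^ k * (1 + x ^ 2) ^ (-ρ) * (1 + l + x ^ 2)⁻¹) D‖ ≤
      (1 + l) ^ ((k : ℝ) / 2 - ρ - 1) := by
  refine norm_cfc_le (by positivity) fun x _ => ?_
  calc ‖x ^ k * (1 + x ^ 2) ^ (-ρ) * (1 + l + x ^ 2)⁻¹‖
      = |x| ^ k * (1 + x ^ 2) ^ (-ρ) * (1 + l + x ^ 2)⁻¹ := by
        rw [Real.norm_eq_abs, abs_mul, abs_mul, abs_pow,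
          abs_of_pos (by positivity : (0 : ℝ) < (1 + x ^ 2) ^ (-ρ)),
          abs_of_pos (by positivity : (0 : ℝ) < (1 + l + x ^ 2)⁻¹)]
    _ ≤ (1 + x ^ 2) ^ ((k : ℝ) / 2) * (1 + x ^ 2) ^ (-ρ) * (1 + l + x ^ 2)⁻¹ := by
        gcongr; exact abs_pow_le_one_add_sq_rpow x k
    _ = (1 + x ^ 2) ^ ((k : ℝ) / 2 - ρ) * (1 + l + x ^ 2)⁻¹ := by
        rw [← Real.rpow_add (by positivity), sub_eq_add_neg]
    _ ≤ (1 + l) ^ ((k : ℝ) / 2 - ρ - 1) := one_add_rpow_mul_inv_le hl (sq_nonneg x) h₀ h₁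

theorem integrable_cfc_inv_one_add_sq_add_sq (D : A) (hD : IsSelfAdjoint D) :
    Integrable fun t : ℝ => cfc (fun x : ℝ => (1 + t ^ 2 + x ^ 2)⁻¹) D :=
  integrable_cfc _ (fun t => (1 + t ^ 2)⁻¹) D continuous_inv_one_add_fst_sq_add_snd_sq.continuousOn
    (.of_forall fun t x _ => norm_inv_one_add_sq_add_sq_le t x) integrable_inv_one_add_sq.2

theorem pi_smul_cfc_rpow_neg_half_eq_integral (D : A) (hD : IsSelfAdjoint D) :
    Real.pi • cfc (fun x : ℝ => (1 + x ^ 2) ^ (-(1 / 2) : ℝ)) D =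
      ∫ t : ℝ, cfc (fun x : ℝ => (1 + t ^ 2 + x ^ 2)⁻¹) D := by
  have := continuous_one_add_sq_rpow (-(1 / 2))
  rw [← cfc_smul _ _ D this.continuousOn, ← cfc_integral _ (fun t => (1 + t ^ 2)⁻¹) D
    continuous_inv_one_add_fst_sq_add_snd_sq.continuousOn
    (.of_forall fun t x _ => norm_inv_one_add_sq_add_sq_le t x) integrable_inv_one_add_sq.2]
  refine cfc_congr fun x _ => ?_
  simp only [add_right_comm _ (_ ^ 2) (x ^ 2)]
  rw [integral_inv_add_sq (by positivity), smul_eq_mul]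

theorem norm_mul_commutator_cfc_inv_mul_le (D a : A) (hD : IsSelfAdjoint D) {l r : ℝ}
    (hl : 0 ≤ l) (hr₀ : 0 ≤ r) (hr₁ : r ≤ 1 / 2) :
    ‖D * (cfc (fun x : ℝ => (1 + l + x ^ 2)⁻¹) D * a - a * cfc (fun x : ℝ => (1 + l + x ^ 2)⁻¹) D) *
        (D * cfc (fun x : ℝ => (1 + x ^ 2) ^ (-r)) D)‖ ≤
      2 * ‖D * a - a * D‖ * (1 + l) ^ (-(1 / 2) - r) := by
  have hx : ContinuousOn (fun x : ℝ => x) (spectrum ℝ D) := continuousOn_id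
  have hρ := (continuous_inv_one_add_add_sq hl).continuousOn (s := spectrum ℝ D)
  have hg := (continuous_one_add_sq_rpow (-r)).continuousOn (s := spectrum ℝ D)
  set u := cfcUnits (fun x : ℝ => 1 + l + x ^ 2) D (fun x _ => by positivity)
  have hu : (u : A) = algebraMap ℝ A (1 + l) + D ^ 2 := by
    change cfc (fun x : ℝ => 1 + l + x ^ 2) D = _
    rw [cfc_const_add (1 + l) (· ^ 2) D, cfc_pow_id D 2]
  set R := cfc (fun x : ℝ => (1 + l + x ^ 2)⁻¹) D
  set G := cfc (fun x : ℝ => (1 + x ^ 2) ^ (-r)) D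
  have hDRD : ‖D * R * D‖ ≤ 1 := by
    have h := norm_cfc_pow_mul_rpow_mul_inv_le D 2 (ρ := 0) hl (by norm_num) (by norm_num)
    rwa [cfc_congr (g := fun x => x * (1 + l + x ^ 2)⁻¹ * x) (fun x _ => by simp; ring),
      cfc_mul _ _ D (hx.fun_mul hρ) hx, cfc_mul _ _ D hx hρ, cfc_id' ℝ D,
      show (2 : ℕ) / (2 : ℝ) - 0 - 1 = 0 by norm_num, Real.rpow_zero] at h
  have hRDG : ‖R * (D * G)‖ ≤ (1 + l) ^ (-(1 / 2) - r) := by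
    have h := norm_cfc_pow_mul_rpow_mul_inv_le D 1 (ρ := r) hl
      (by norm_num; linarith) (by norm_num; linarith)
    rwa [cfc_congr (g := fun x => (1 + l + x ^ 2)⁻¹ * (x * (1 + x ^ 2) ^ (-r)))
        (fun x _ => by simp; ring),
      cfc_mul _ _ D hρ (hx.fun_mul hg), cfc_mul _ _ D hx hg, cfc_id' ℝ D,
      show (1 : ℕ) / (2 : ℝ) - r - 1 = -(1 / 2) - r by norm_num; ring] at h
  have hDR : ‖D * R‖ ≤ (1 + l) ^ (-(1 / 2) : ℝ) := by
    have h := norm_cfc_pow_mul_rpow_mul_inv_le D 1 (ρ := 0) hl (by norm_num) (by norm_num)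
    rwa [cfc_congr (g := fun x => x * (1 + l + x ^ 2)⁻¹) (fun x _ => by simp),
      cfc_mul _ _ D hx hρ, cfc_id' ℝ D,
      show (1 : ℕ) / (2 : ℝ) - 0 - 1 = -(1 / 2) by norm_num] at h
  have hDRDG : ‖D * (R * (D * G))‖ ≤ (1 + l) ^ (-r) := by
    have h := norm_cfc_pow_mul_rpow_mul_inv_le D 2 (ρ := r) hl
      (by norm_num; linarith) (by norm_num; linarith)
    rwa [cfc_congr (g := fun x => x * ((1 + l + x ^ 2)⁻¹ * (x * (1 + x ^ 2) ^ (-r))))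
        (fun x _ => by simp; ring),
      cfc_mul _ _ D hx (hρ.fun_mul (hx.fun_mul hg)), cfc_mul _ _ D hρ (hx.fun_mul hg),
      cfc_mul _ _ D hx hg, cfc_id' ℝ D, show (2 : ℕ) / (2 : ℝ) - r - 1 = -r by norm_num] at h
  -- `R` is `↑u⁻¹` by definition of `cfcUnits`.
  calc ‖D * (R * a - a * R) * (D * G)‖
      ≤ ‖D * R * D‖ * ‖D * a - a * D‖ * ‖R * (D * G)‖ +
          ‖D * R‖ * ‖D * a - a * D‖ * ‖D * (R * (D * G))‖ :=
        norm_mul_commutator_units_inv_mul_le u (1 + l) D a (D * G) hu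
    _ ≤ 1 * ‖D * a - a * D‖ * (1 + l) ^ (-(1 / 2) - r) +
          (1 + l) ^ (-(1 / 2) : ℝ) * ‖D * a - a * D‖ * (1 + l) ^ (-r) := by
        gcongr
    _ = 2 * ‖D * a - a * D‖ * (1 + l) ^ (-(1 / 2) - r) := by
        rw [show -(1 / 2) - r = -(1 / 2) + -r by ring, Real.rpow_add (by positivity)]
        ring

theorem norm_mul_commutator_cfc_mul_le (D a : A) (hD : IsSelfAdjoint D) {r : ℝ}
    (hr₀ : 0 < r) (hr₁ : r ≤ 1 / 2) :
    ‖D * (cfc (fun x : ℝ => (1 + x ^ 2) ^ (-(1 / 2) : ℝ)) D * a -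
          a * cfc (fun x : ℝ => (1 + x ^ 2) ^ (-(1 / 2) : ℝ)) D) *
        (D * cfc (fun x : ℝ => (1 + x ^ 2) ^ (-r)) D)‖ ≤
      2 * ‖D * a - a * D‖ / Real.pi * ∫ t : ℝ, (1 + t ^ 2) ^ (-(1 / 2) - r) := by
  set G := cfc (fun x : ℝ => (1 + x ^ 2) ^ (-r)) D
  let L : A →L[ℝ] A := ((ContinuousLinearMap.mul ℝ A).flip (D * G)).comp
    ((ContinuousLinearMap.mul ℝ A D).comp
      ((ContinuousLinearMap.mul ℝ A).flip a - ContinuousLinearMap.mul ℝ A a))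
  have hL (S : A) : L S = D * (S * a - a * S) * (D * G) := rfl
  have hrep : D * (cfc (fun x : ℝ => (1 + x ^ 2) ^ (-(1 / 2) : ℝ)) D * a -
        a * cfc (fun x : ℝ => (1 + x ^ 2) ^ (-(1 / 2) : ℝ)) D) * (D * G) =
      Real.pi⁻¹ • ∫ t : ℝ, L (cfc (fun x : ℝ => (1 + t ^ 2 + x ^ 2)⁻¹) D) := by
    rw [L.integral_comp_comm (integrable_cfc_inv_one_add_sq_add_sq D hD),
      ← pi_smul_cfc_rpow_neg_half_eq_integral D hD, map_smul, inv_smul_smul₀ Real.pi_ne_zero, hL]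
  have hbound : Integrable fun t : ℝ => 2 * ‖D * a - a * D‖ * (1 + t ^ 2) ^ (-(1 / 2) - r) :=
    (integrable_one_add_sq_rpow (by linarith)).const_mul _
  rw [hrep, norm_smul, Real.norm_of_nonneg (by positivity)]
  calc Real.pi⁻¹ * ‖∫ t : ℝ, L (cfc (fun x : ℝ => (1 + t ^ 2 + x ^ 2)⁻¹) D)‖
      ≤ Real.pi⁻¹ * ∫ t : ℝ, 2 * ‖D * a - a * D‖ * (1 + t ^ 2) ^ (-(1 / 2) - r) := by
        gcongr
        refine norm_integral_le_of_norm_le hbound (.of_forall fun t => ?_)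
        rw [hL]
        exact norm_mul_commutator_cfc_inv_mul_le D a hD (sq_nonneg t) hr₀.le hr₁
    _ = 2 * ‖D * a - a * D‖ / Real.pi * ∫ t : ℝ, (1 + t ^ 2) ^ (-(1 / 2) - r) := by
        rw [integral_const_mul]; ring

end

variable {H : Type*} [NormedAddCommGroup H] [InnerProductSpace ℂ H] [CompleteSpace H]

theorem stmt19 (D a : H →L[ℂ] H) (hD : IsSelfAdjoint D) (r : ℝ) (hr : r ∈ Ioo (0:ℝ) (1/2)) :
    ‖D * (cfc (fun x : ℝ => (1 + x ^ 2) ^ (-(1/2 : ℝ))) D * a -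
          a * cfc (fun x : ℝ => (1 + x ^ 2) ^ (-(1/2 : ℝ))) D) *
        (D * cfc (fun x : ℝ => (1 + x ^ 2) ^ (-r)) D)‖ ≤
      2 * ‖D * a - a * D‖ / Real.pi *
        ∫ l in Ioi (0:ℝ), l ^ (-(1/2 : ℝ)) * (1 + l) ^ (-(1/2 : ℝ) - r) := by
  rw [integral_Ioi_rpow_neg_half_mul_one_add_rpow]
  exact norm_mul_commutator_cfc_mul_le D a hD hr.1 hr.2.le
end
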